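/- arXiv:1406.1965 — 4 statements merged into one kernel-verified Lean document; each statement's English description precedes it below -/
import Mathlib

section
/- If two products of vector operations are equal, s̲₁⋯s̲ₙ = t̲₁⋯t̲ₘ in Vops(L̲)*, then n = m, and for each generator a̲ ∈ Vops(L̲) the number of occurrences of a̲ among s̲₁,...,s̲ₙ equals the number among t̲₁,...,t̲ₘ. -/
open scoped Classical

/-- Projection of a string onto a subalphabet `A`: delete all symbols not in `A`. -/
noncomputable def proj {α : Type*} (A : Set α) : List α → List α
  | [] => []
  | a :: s => if a ∈ A then a :: proj A s else proj A s

/-- The vector operation `σ̲ = (σ/A₁, …, σ/Aₙ)` associated to a symbol `σ`. -/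
noncomputable def vop {α : Type*} {n : ℕ} (A : Fin n → Set α) (σ : α) :
    Fin n → List α :=
  fun i => if σ ∈ A i then [σ] else []

/-- The product `σ̲₁ ⋯ σ̲ₘ` (elementwise concatenation in `(Σ*)ⁿ`) of the vector
operations of the symbols in a list. -/
noncomputable def vprod {α : Type*} {n : ℕ} (A : Fin n → Set α) :
    List α → (Fin n → List α)
  | [] => fun _ => []
  | σ :: l => fun i => vop A σ i ++ vprod A l i

/-! The `i`-th component of `σ̲₁ ⋯ σ̲ₘ` is the projection of `σ₁ ⋯ σₘ` onto `Aᵢ`, which keeps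
every occurrence of each symbol of `Aᵢ`; so the product determines how often each symbol of
`⋃ᵢ Aᵢ` occurs, and the two words are permutations of each other. -/

lemma proj_eq_filter {α : Type*} (A : Set α) (l : List α) :
    proj A l = l.filter (· ∈ A) := by
  induction l with
  | nil => rfl
  | cons a l ih => by_cases ha : a ∈ A <;> simp [proj, ha, ih]

lemma vprod_apply {α : Type*} {n : ℕ} (A : Fin n → Set α) (l : List α) (i : Fin n) :
    vprod A l i = proj (A i) l := by
  induction l with
  | nil => rfl
  | cons a l ih => by_cases ha : a ∈ A i <;> simp [vprod, vop, proj, ha, ih]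

lemma count_vprod_of_mem {α : Type*} [DecidableEq α] {n : ℕ} (A : Fin n → Set α)
    (l : List α) {i : Fin n} {σ : α} (hσ : σ ∈ A i) :
    (vprod A l i).count σ = l.count σ := by
  rw [vprod_apply, proj_eq_filter, List.count_filter (by simpa using hσ)]

/-- Equal products of vector operations have the same length and the same number
of occurrences of each generator. -/
theorem vprod_eq_length_count {α : Type*} [DecidableEq α] {n : ℕ}
    (A : Fin n → Set α) (ws vs : List α)
    (hws : ∀ σ ∈ ws, σ ∈ ⋃ i, A i) (hvs : ∀ σ ∈ vs, σ ∈ ⋃ i, A i)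
    (h : vprod A ws = vprod A vs) :
    ws.length = vs.length ∧ ∀ σ : α, ws.count σ = vs.count σ := by
  have hcount : ∀ σ : α, ws.count σ = vs.count σ := by
    intro σ
    by_cases hσ : σ ∈ ⋃ i, A i
    · obtain ⟨i, hi⟩ := Set.mem_iUnion.mp hσ
      rw [← count_vprod_of_mem A ws hi, h, count_vprod_of_mem A vs hi]
    · rw [List.count_eq_zero_of_not_mem (mt (hws σ) hσ),
        List.count_eq_zero_of_not_mem (mt (hvs σ) hσ)]
  exact ⟨(List.perm_iff_count.mpr hcount).length_eq, hcount⟩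
end

section
/- Every function f from the set of vector-operation generators of L to Vops(L')* that preserves commutation (a̲b̲ = b̲a̲ implies f(a̲)f(b̲) = f(b̲)f(a̲)) extends uniquely to a monoid homomorphism Vops(L)* → Vops(L')*. -/
open scoped Classical

/-- The vector operation `σ̲ = (σ/A₁, …, σ/Aₙ)` in the product monoid
`(FreeMonoid α)ⁿ`. -/
noncomputable def vopF {α : Type*} {n : ℕ} (A : Fin n → Set α) (σ : α) :
    Fin n → FreeMonoid α :=
  fun i => if σ ∈ A i then FreeMonoid.of σ else 1

/-- The set of vector-operation generators for subalphabets `A`. -/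
noncomputable def Gens {α : Type*} {n : ℕ} (A : Fin n → Set α) :
    Set (Fin n → FreeMonoid α) :=
  {v | ∃ σ ∈ ⋃ i, A i, v = vopF A σ}

/-! Vector operations behave like the letters of a trace monoid: if a generator `a` left-divides
a product `c₁ ⋯ cₖ` of generators, then `a = cⱼ` for the first `cⱼ` whose support meets that of
`a` (both begin that component with their letter), and `c₁, …, cⱼ₋₁` commute with `a`. Cancelling
`a` and inducting, two words in the generators with the same product have the same image under
any `f` that respects these commutations, so `f` extends along an arbitrary choice of words. -/

open Function

theorem Pi.commute_of_disjoint_mulSupport {ι M : Type*} [Monoid M] {a b : ι → M}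
    (h : Disjoint (mulSupport a) (mulSupport b)) : Commute a b := by
  funext i
  by_cases ha : a i = 1
  · simp [ha]
  · simp [notMem_mulSupport.1 (Set.disjoint_left.1 h (mem_mulSupport.2 ha))]

theorem Pi.dvd_of_dvd_mul_left_of_disjoint_mulSupport {ι M : Type*} [Monoid M]
    {a b z : ι → M} (h : Disjoint (mulSupport a) (mulSupport b)) (hdvd : a ∣ b * z) :
    a ∣ z := by
  obtain ⟨x, hx⟩ := hdvd
  refine ⟨fun i => if a i = 1 then z i else x i, funext fun i => ?_⟩
  by_cases ha : a i = 1
  · simp [ha]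
  · have hb := notMem_mulSupport.1 (Set.disjoint_left.1 h (mem_mulSupport.2 ha))
    simpa [ha, hb] using congrFun hx i

theorem List.prod_append_cons_of_forall_commute {M : Type*} [Monoid M] {p s : List M} {x : M}
    (h : ∀ y ∈ p, Commute x y) : (p ++ x :: s).prod = x * (p ++ s).prod := by
  rw [List.prod_append, List.prod_cons, List.prod_append, ← mul_assoc,
    ← (Commute.list_prod_right _ _ h).eq, mul_assoc]

theorem Submonoid.existsUnique_hom_closure_of_list_prod_eq {M P : Type*} [Monoid M] [Monoid P]
    {S : Set M} {T : Submonoid P} (f : M → P) (hfT : ∀ x ∈ S, f x ∈ T)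
    (hf : ∀ l₁ l₂ : List M, (∀ x ∈ l₁, x ∈ S) → (∀ x ∈ l₂, x ∈ S) →
      l₁.prod = l₂.prod → (l₁.map f).prod = (l₂.map f).prod) :
    ∃! g : closure S →* T, ∀ x (hx : x ∈ S), (g ⟨x, subset_closure hx⟩ : P) = f x := by
  choose L hLS hLprod using fun x : closure S => exists_list_of_mem_closure x.2
  have hL : ∀ (x : closure S) (l : List M), (∀ y ∈ l, y ∈ S) → l.prod = x →
      ((L x).map f).prod = (l.map f).prod :=
    fun x l hl h => hf _ _ (hLS x) hl ((hLprod x).trans h.symm)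
  let g : closure S →* T :=
    { toFun x := ⟨((L x).map f).prod,
        T.list_prod_mem (by simpa using fun y hy => hfT y (hLS x y hy))⟩
      map_one' := Subtype.ext (hL 1 [] (by simp) rfl)
      map_mul' x y := Subtype.ext <| by
        change ((L (x * y)).map f).prod = ((L x).map f).prod * ((L y).map f).prod
        rw [hL (x * y) (L x ++ L y) (List.forall_mem_append.2 ⟨hLS x, hLS y⟩)
          (by simp [hLprod]), List.map_append, List.prod_append] }
  have hgS : ∀ x (hx : x ∈ S), (g ⟨x, subset_closure hx⟩ : P) = f x :=
    fun x hx => (hL _ [x] (by simpa using hx) (by simp)).trans (by simp)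
  refine ⟨g, hgS, fun g' hg' => MonoidHom.eq_of_eqOn_denseM closure_closure_coe_preimage
    fun x hx => Subtype.ext ((hg' x hx).trans (hgS x hx).symm)⟩

section Gens

variable {α : Type*} {n : ℕ} {A : Fin n → Set α}

theorem vopF_apply_ne_one_iff {σ : α} {i : Fin n} : vopF A σ i ≠ 1 ↔ σ ∈ A i := by
  by_cases h : σ ∈ A i <;> simp [vopF, h, FreeMonoid.of_ne_one]

theorem ne_one_of_mem_Gens {a : Fin n → FreeMonoid α} (ha : a ∈ Gens A) : a ≠ 1 := by
  obtain ⟨σ, hσ, rfl⟩ := ha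
  obtain ⟨i, hi⟩ := Set.mem_iUnion.1 hσ
  exact fun h => vopF_apply_ne_one_iff.2 hi (congrFun h i)

theorem not_dvd_one_of_mem_Gens {a : Fin n → FreeMonoid α} (ha : a ∈ Gens A) : ¬a ∣ 1 :=
  fun ⟨_, h⟩ => ne_one_of_mem_Gens ha (eq_one_of_mul_right' h.symm)

theorem eq_of_mem_Gens_of_dvd_mul {a b z : Fin n → FreeMonoid α} (ha : a ∈ Gens A)
    (hb : b ∈ Gens A) (hab : ¬Disjoint (mulSupport a) (mulSupport b)) (hdvd : a ∣ b * z) :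
    a = b := by
  obtain ⟨σ, -, rfl⟩ := ha
  obtain ⟨τ, -, rfl⟩ := hb
  obtain ⟨i, hσ, hτ⟩ := Set.not_disjoint_iff.1 hab
  obtain ⟨x, hx⟩ := hdvd
  have hi := congrArg (fun w => (w i).toList) hx
  simp only [Pi.mul_apply, vopF, if_pos (vopF_apply_ne_one_iff.1 hσ),
    if_pos (vopF_apply_ne_one_iff.1 hτ), FreeMonoid.toList_of_mul, List.cons.injEq] at hi
  rw [hi.1]

theorem exists_eq_append_cons_of_dvd_prod {a : Fin n → FreeMonoid α} (ha : a ∈ Gens A)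
    {l : List (Fin n → FreeMonoid α)} (hl : ∀ c ∈ l, c ∈ Gens A) (hdvd : a ∣ l.prod) :
    ∃ p s, l = p ++ a :: s ∧ ∀ c ∈ p, Disjoint (mulSupport a) (mulSupport c) := by
  induction l with
  | nil => exact absurd hdvd (not_dvd_one_of_mem_Gens ha)
  | cons b r ih =>
    rw [List.forall_mem_cons] at hl
    rw [List.prod_cons] at hdvd
    by_cases hab : Disjoint (mulSupport a) (mulSupport b)
    · obtain ⟨p, s, rfl, hp⟩ :=
        ih hl.2 (Pi.dvd_of_dvd_mul_left_of_disjoint_mulSupport hab hdvd)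
      exact ⟨b :: p, s, rfl, List.forall_mem_cons.2 ⟨hab, hp⟩⟩
    · obtain rfl := eq_of_mem_Gens_of_dvd_mul ha hl.1 hab hdvd
      exact ⟨[], r, rfl, by simp⟩

theorem list_map_prod_eq_of_prod_eq {M : Type*} [Monoid M] (f : (Fin n → FreeMonoid α) → M)
    (hf : ∀ a ∈ Gens A, ∀ b ∈ Gens A,
      Disjoint (mulSupport a) (mulSupport b) → Commute (f a) (f b))
    (l₁ l₂ : List (Fin n → FreeMonoid α)) (h₁ : ∀ c ∈ l₁, c ∈ Gens A)
    (h₂ : ∀ c ∈ l₂, c ∈ Gens A) (h : l₁.prod = l₂.prod) :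
    (l₁.map f).prod = (l₂.map f).prod := by
  induction l₁ generalizing l₂ with
  | nil =>
    cases l₂ with
    | nil => rfl
    | cons b r =>
      exact absurd ⟨r.prod, by simpa using h⟩
        (not_dvd_one_of_mem_Gens (h₂ b List.mem_cons_self))
  | cons a t ih =>
    rw [List.forall_mem_cons] at h₁
    obtain ⟨p, s, rfl, hp⟩ :=
      exists_eq_append_cons_of_dvd_prod h₁.1 h₂ ⟨t.prod, h.symm.trans List.prod_cons⟩
    simp only [List.forall_mem_append, List.forall_mem_cons] at h₂
    rw [List.prod_cons, List.prod_append_cons_of_forall_commute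
      fun c hc => Pi.commute_of_disjoint_mulSupport (hp c hc)] at h
    rw [List.map_cons, List.prod_cons, List.map_append, List.map_cons,
      List.prod_append_cons_of_forall_commute, ← List.map_append,
      ih (p ++ s) h₁.2 (List.forall_mem_append.2 ⟨h₂.1, h₂.2.2⟩) (mul_left_cancel h)]
    exact List.forall_mem_map.2 fun c hc => hf a h₁.1 c (h₂.1 c hc) (hp c hc)

end Gens

/-- Every commutation-preserving map from the generators of `Vops(L)` into
`Vops(L')*` extends uniquely to a monoid homomorphism
`Vops(L)* → Vops(L')*`. -/
theorem vops_universal {α : Type*} {n m : ℕ} (A : Fin n → Set α)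
    (A' : Fin m → Set α)
    (f : (Fin n → FreeMonoid α) → (Fin m → FreeMonoid α))
    (hf : ∀ v ∈ Gens A, f v ∈ Submonoid.closure (Gens A'))
    (hcomm : ∀ a ∈ Gens A, ∀ b ∈ Gens A,
      a * b = b * a → f a * f b = f b * f a) :
    ∃! g : Submonoid.closure (Gens A) →* Submonoid.closure (Gens A'),
      ∀ v (hv : v ∈ Gens A),
        (g ⟨v, Submonoid.subset_closure hv⟩ : Fin m → FreeMonoid α) = f v :=
  Submonoid.existsUnique_hom_closure_of_list_prod_eq f hf <|
    list_map_prod_eq_of_prod_eq f fun a ha b hb hab =>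
      hcomm a ha b hb (Pi.commute_of_disjoint_mulSupport hab)
end

section
/- For prefix-closed languages L₁,...,Lₙ over Σ, the map h sending σ ∈ ⋃ᵢαLᵢ to σ̲ = (σ/αL₁,...,σ/αLₙ), extended to a monoid homomorphism on strings, maps L₁ ‖ ⋯ ‖ Lₙ surjectively onto VFS(L₁,...,Lₙ); moreover s ∈ L₁ ‖ ⋯ ‖ Lₙ if and only if h(s) ∈ VFS(L₁,...,Lₙ). -/
open scoped Classical

/-- Membership in the submonoid `Vops(A₁,…,Aₙ)*` of `(Σ*)ⁿ` generated by the
vector operations. -/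
noncomputable def InVops {α : Type*} {n : ℕ} (A : Fin n → Set α)
    (v : Fin n → List α) : Prop :=
  ∃ l : List α, (∀ σ ∈ l, σ ∈ ⋃ i, A i) ∧ vprod A l = v

/-- `VFS(L₁,…,Lₙ) = Vops(A₁,…,Aₙ)* ∩ (L₁ × ⋯ × Lₙ)`. -/
noncomputable def VFS {α : Type*} {n : ℕ} (A : Fin n → Set α)
    (L : Fin n → Set (List α)) : Set (Fin n → List α) :=
  {v | InVops A v ∧ ∀ i, v i ∈ L i}

/-- `L₁ ‖ ⋯ ‖ Lₙ = {s ∈ (⋃ᵢAᵢ)* : s/Aᵢ ∈ Lᵢ for all i}`. -/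
noncomputable def Par {α : Type*} {n : ℕ} (A : Fin n → Set α)
    (L : Fin n → Set (List α)) : Set (List α) :=
  {s | (∀ a ∈ s, a ∈ ⋃ i, A i) ∧ ∀ i, proj (A i) s ∈ L i}

/-- The hypotheses that each `(Lᵢ, Aᵢ)` is a nonempty prefix-closed language
over the subalphabet `Aᵢ`. -/
def IsPCL {α : Type*} {n : ℕ} (A : Fin n → Set α)
    (L : Fin n → Set (List α)) : Prop :=
  ∀ i, (L i).Nonempty ∧ (∀ s ∈ L i, ∀ a ∈ s, a ∈ A i) ∧
    (∀ s ∈ L i, ∀ t, t <+: s → t ∈ L i)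

section

variable {α : Type*} {n : ℕ} (A : Fin n → Set α)

theorem vprod_apply_eq_proj (s : List α) (i : Fin n) :
    vprod A s i = proj (A i) s := by
  induction s with
  | nil => rfl
  | cons a t ih =>
    simp only [vprod, vop, proj, ih]
    split_ifs <;> rfl

theorem inVops_vprod {s : List α} (hs : ∀ a ∈ s, a ∈ ⋃ i, A i) : InVops A (vprod A s) :=
  ⟨s, hs, rfl⟩

theorem mem_Par_iff_vprod_mem_VFS (L : Fin n → Set (List α)) {s : List α}
    (hs : ∀ a ∈ s, a ∈ ⋃ i, A i) : s ∈ Par A L ↔ vprod A s ∈ VFS A L := by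
  simp only [Par, VFS, Set.mem_ofPred_eq, vprod_apply_eq_proj]
  exact ⟨fun h => ⟨inVops_vprod A hs, h.2⟩, fun h => ⟨hs, h.2⟩⟩

end

theorem par_to_vfs_general {α : Type*} {n : ℕ} (A : Fin n → Set α)
    (L : Fin n → Set (List α)) :
    (∀ s ∈ Par A L, vprod A s ∈ VFS A L) ∧
    (∀ v ∈ VFS A L, ∃ s ∈ Par A L, vprod A s = v) ∧
    (∀ s : List α, (∀ a ∈ s, a ∈ ⋃ i, A i) →
      (s ∈ Par A L ↔ vprod A s ∈ VFS A L)) := by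
  refine ⟨fun s hs => (mem_Par_iff_vprod_mem_VFS A L hs.1).mp hs, ?_,
    fun s hs => mem_Par_iff_vprod_mem_VFS A L hs⟩
  rintro v ⟨⟨s, hs, rfl⟩, hmem⟩
  exact ⟨s, (mem_Par_iff_vprod_mem_VFS A L hs).mpr ⟨inVops_vprod A hs, hmem⟩, rfl⟩

/-- The homomorphism `h : σ ↦ σ̲` maps `L₁ ‖ ⋯ ‖ Lₙ` surjectively onto
`VFS(L₁,…,Lₙ)`; moreover `s ∈ L₁ ‖ ⋯ ‖ Lₙ` iff `h(s) ∈ VFS(L₁,…,Lₙ)`. -/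
theorem par_to_vfs {α : Type*} {n : ℕ} (A : Fin n → Set α)
    (L : Fin n → Set (List α)) (hL : IsPCL A L) :
    (∀ s ∈ Par A L, vprod A s ∈ VFS A L) ∧
    (∀ v ∈ VFS A L, ∃ s ∈ Par A L, vprod A s = v) ∧
    (∀ s : List α, (∀ a ∈ s, a ∈ ⋃ i, A i) →
      (s ∈ Par A L ↔ vprod A s ∈ VFS A L)) :=
  par_to_vfs_general A L
end

section
/- A vector s̲ ∈ L₁ × ⋯ × Lₙ lies in Vops(αL₁,...,αLₙ)* if and only if s̲ is reachable from ε̲ = (ε,...,ε) by repeatedly appending vector operations σ̲ while staying inside L₁ × ⋯ × Lₙ at every step. Consequently VFS(L₁,...,Lₙ) equals the algebraic closure of ε̲ under the partial operations s̲ ↦ s̲σ̲ (defined when s̲σ̲ ∈ L₁ × ⋯ × Lₙ). -/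
open scoped Classical

/-- Reachability from `ε̲` by appending vector operations while staying inside
`L₁ × ⋯ × Lₙ` at every step. -/
inductive Reach {α : Type*} {n : ℕ} (A : Fin n → Set α)
    (L : Fin n → Set (List α)) : (Fin n → List α) → Prop
  | nil : (∀ i, ([] : List α) ∈ L i) → Reach A L (fun _ => [])
  | snoc {s : Fin n → List α} {σ : α} :
      Reach A L s → σ ∈ ⋃ i, A i →
      (∀ i, (s i ++ vop A σ i) ∈ L i) →
      Reach A L (fun i => s i ++ vop A σ i)

theorem vprod_append {α : Type*} {n : ℕ} (A : Fin n → Set α) (l l' : List α) (i : Fin n) :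
    vprod A (l ++ l') i = vprod A l i ++ vprod A l' i := by
  induction l with
  | nil => simp [vprod]
  | cons σ t ih => simp [vprod, ih]

theorem vprod_concat {α : Type*} {n : ℕ} (A : Fin n → Set α) (l : List α) (σ : α) :
    vprod A (l ++ [σ]) = fun i => vprod A l i ++ vop A σ i := by
  funext i
  simp [vprod_append, vprod]

namespace Reach

variable {α : Type*} {n : ℕ} {A : Fin n → Set α} {L : Fin n → Set (List α)}
  {s : Fin n → List α}

theorem mem (h : Reach A L s) : ∀ i, s i ∈ L i := by
  cases h with
  | nil h => exact h
  | snoc _ _ h => exact h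

theorem inVops (h : Reach A L s) : InVops A s := by
  induction h with
  | nil _ => exact ⟨[], by simp, rfl⟩
  | @snoc s σ _ hσ _ ih =>
    obtain ⟨l, hl, rfl⟩ := ih
    refine ⟨l ++ [σ], ?_, vprod_concat A l σ⟩
    simpa [or_imp, forall_and] using And.intro hl hσ

end Reach

-- Prefix closure keeps every intermediate product `σ̲₁ ⋯ σ̲ₖ` inside `L₁ × ⋯ × Lₙ`.
theorem reach_vprod {α : Type*} {n : ℕ} {A : Fin n → Set α} {L : Fin n → Set (List α)}
    (hL : ∀ i, ∀ s ∈ L i, ∀ t, t <+: s → t ∈ L i) (l : List α)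
    (hl : ∀ σ ∈ l, σ ∈ ⋃ i, A i) (hmem : ∀ i, vprod A l i ∈ L i) :
    Reach A L (vprod A l) := by
  induction l using List.reverseRecOn with
  | nil => exact Reach.nil hmem
  | append_singleton l σ ih =>
    have hprefix : ∀ i, vprod A l i ∈ L i := fun i =>
      hL i _ (hmem i) _ ⟨vop A σ i, by rw [vprod_concat]⟩
    rw [vprod_concat] at hmem ⊢
    exact Reach.snoc (ih (fun τ hτ => hl τ (by simp [hτ])) hprefix) (hl σ (by simp)) hmem

theorem inVops_iff_reach {α : Type*} {n : ℕ} {A : Fin n → Set α} {L : Fin n → Set (List α)}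
    (hL : ∀ i, ∀ s ∈ L i, ∀ t, t <+: s → t ∈ L i) {s : Fin n → List α}
    (hs : ∀ i, s i ∈ L i) : InVops A s ↔ Reach A L s := by
  refine ⟨?_, Reach.inVops⟩
  rintro ⟨l, hl, rfl⟩
  exact reach_vprod hL l hl hs

/-- A vector of `L₁ × ⋯ × Lₙ` lies in `Vops*` iff it is reachable from `ε̲`
staying inside `L₁ × ⋯ × Lₙ`; consequently `VFS(L₁,…,Lₙ)` is exactly the
algebraic closure of `ε̲` under the partial successor operations. -/
theorem vfs_eq_reach {α : Type*} {n : ℕ} (A : Fin n → Set α)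
    (L : Fin n → Set (List α)) (hL : IsPCL A L) :
    (∀ s : Fin n → List α, (∀ i, s i ∈ L i) → (InVops A s ↔ Reach A L s)) ∧
    VFS A L = {s | Reach A L s} := by
  have hprefix : ∀ i, ∀ s ∈ L i, ∀ t, t <+: s → t ∈ L i := fun i => (hL i).2.2
  refine ⟨fun s hs => inVops_iff_reach hprefix hs, Set.ext fun s => ?_⟩
  exact ⟨fun ⟨hv, hs⟩ => (inVops_iff_reach hprefix hs).1 hv, fun h => ⟨h.inVops, h.mem⟩⟩
end
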